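/- arXiv:1811.02332 — 2 statements merged into one kernel-verified Lean document; each statement's English description precedes it below -/
import Mathlib

section
/- If G is a finite connected graph other than K_1, K_2, or P_3, then χ_g^∞(G) > 3; that is, Bob wins the eternal vertex coloring game on G when only 3 colors are available. -/
open SimpleGraph

/-- A state of the eternal vertex coloring game: the current (partial) coloring,
the set of vertices already chosen in the current round, and whose turn it is. -/
structure EGState (V : Type) (k : ℕ) where
  col : V → Option (Fin k)
  played : Finset V
  aliceTurn : Bool

variable {V : Type} [Fintype V] [DecidableEq V]

/-- A move (vertex `v`, color `c`) is legal: `v` has not yet been chosen this round,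
`c` differs from the current color of `v`, and `c` does not appear on a neighbor. -/
def EGLegal (G : SimpleGraph V) {k : ℕ} (s : EGState V k) (v : V) (c : Fin k) : Prop :=
  v ∉ s.played ∧ s.col v ≠ some c ∧ ∀ u, G.Adj v u → s.col u ≠ some c

/-- The state after (re-)coloring `v` with `c`; the round resets when every vertex
has been chosen once. -/
def EGStep {k : ℕ} (s : EGState V k) (v : V) (c : Fin k) : EGState V k where
  col := Function.update s.col v (some c)
  played := if insert v s.played = Finset.univ then ∅ else insert v s.played
  aliceTurn := !s.aliceTurn

/-- Alice can survive `n` further moves: on her turn she has some legal move after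
which she survives; on Bob's turn every vertex he might choose admits a legal color
(otherwise Bob wins by choosing a stuck vertex) and she survives every legal move of his. -/
def EGSurvives (G : SimpleGraph V) {k : ℕ} : ℕ → EGState V k → Prop
  | 0, _ => True
  | n + 1, s =>
      if s.aliceTurn then
        ∃ v c, EGLegal G s v c ∧ EGSurvives G n (EGStep s v c)
      else
        (∀ v, v ∉ s.played → ∃ c, EGLegal G s v c) ∧
          ∀ v c, EGLegal G s v c → EGSurvives G n (EGStep s v c)

/-- The initial state: all vertices uncolored, Alice to move. -/
def EGInit (V : Type) (k : ℕ) : EGState V k := ⟨fun _ => none, ∅, true⟩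

/-- Alice wins the eternal vertex coloring game on `G` with `k` colors
(the game is finitely branching, so winning is equivalent to surviving forever). -/
def AliceWinsEG (G : SimpleGraph V) (k : ℕ) : Prop :=
  ∀ n, EGSurvives G n (EGInit V k)

/-- The eternal game chromatic number `χ_g^∞(G)`. -/
noncomputable def eternalGameChromatic (G : SimpleGraph V) : ℕ :=
  sInf {k | AliceWinsEG G k}


/-!
With at most two colors, a vertex with a neighbor cannot be recolored once the whole graph is
colored, so Bob wins as soon as the first round is over.

With three colors, an unplayed vertex `u` that can still be recolored sees only one color on
its neighbors, and an unplayed neighbor `w` of `u` that can be recolored sees only `u`'s color.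
So Bob may recolor `w` with the color still free at `u`; if a further neighbor of `u` keeps its
color through Alice's reply, `u` sees three colors and is stuck at Bob's next turn. Bob gets
this position whenever Alice opens a round on a vertex `t` that starts a path `t u w` with
`w ≠ t`, and every vertex does unless `G` is a star. The parity of `|V|` decides who opens each
round. Off stars, Bob waits for a round opened by Alice. On a star with at least three leaves, if
Bob opens a round he plays the argument at the center; if Alice opens it, Bob has made two
leaves differently colored during the first round, which blocks the center for Alice.
-/

open Finset Filter

theorem fin_three_eq_of_ne :
    ∀ a b x y : Fin 3, a ≠ b → x ≠ a → x ≠ b → y ≠ a → y ≠ b → x = y := by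
  decide

theorem fin_three_eq_or_eq_or_eq :
    ∀ a b c x : Fin 3, a ≠ b → a ≠ c → b ≠ c → x = a ∨ x = b ∨ x = c := by
  decide

theorem fin_three_exists_ne_ne : ∀ a b : Fin 3, ∃ c, c ≠ a ∧ c ≠ b := by
  decide

theorem fin_eq_or_eq_of_le_two {k : ℕ} (hk : k ≤ 2) {a b : Fin k} (hab : a ≠ b) (c : Fin k) :
    c = a ∨ c = b := by
  have := c.isLt
  have := Fin.val_ne_of_ne hab
  omega

theorem exists_notMem_of_card_lt {α : Type*} [Fintype α] {s : Finset α}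
    (h : #s < Fintype.card α) : ∃ x, x ∉ s := by
  obtain ⟨x, -, hx⟩ := exists_mem_notMem_of_card_lt_card (t := univ) (by simpa using h)
  exact ⟨x, hx⟩

namespace SimpleGraph

variable {α β : Type*} {G : SimpleGraph α}

theorem Connected.eq_top_of_card_le_two [Fintype α] (hconn : G.Connected)
    (h : Fintype.card α ≤ 2) : G = ⊤ := by
  ext a b
  refine ⟨G.ne_of_adj, fun hab => ?_⟩
  have : Nontrivial α := ⟨a, b, hab⟩
  obtain ⟨x, hx⟩ := hconn.preconnected.exists_adj_of_nontrivial a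
  obtain rfl : x = b := by
    by_contra hxb
    have := Fintype.two_lt_card_iff.2 ⟨a, b, x, hab, hx.ne, Ne.symm hxb⟩
    omega
  exact hx

theorem Connected.three_le_card [Fintype α] (hconn : G.Connected)
    (h1 : ¬ Nonempty (G ≃g (⊤ : SimpleGraph (Fin 1))))
    (h2 : ¬ Nonempty (G ≃g (⊤ : SimpleGraph (Fin 2)))) :
    3 ≤ Fintype.card α := by
  by_contra! h
  obtain rfl := hconn.eq_top_of_card_le_two (by omega)
  have : Nonempty α := hconn.nonempty
  have : 0 < Fintype.card α := Fintype.card_pos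
  interval_cases hn : Fintype.card α
  · exact h1 ⟨Iso.completeGraph (Fintype.equivFinOfCardEq hn)⟩
  · exact h2 ⟨Iso.completeGraph (Fintype.equivFinOfCardEq hn)⟩

def IsStarCenter (G : SimpleGraph α) (z : α) : Prop :=
  ∀ v, v ≠ z → G.Adj z v ∧ ∀ w, G.Adj v w → w = z

theorem IsStarCenter.adj_iff {z : α} (hz : G.IsStarCenter z) {a b : α} :
    G.Adj a b ↔ a ≠ b ∧ (a = z ∨ b = z) := by
  refine ⟨fun h => ⟨h.ne, ?_⟩, ?_⟩
  · by_cases ha : a = z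
    · exact Or.inl ha
    · exact Or.inr ((hz a ha).2 b h)
  · rintro ⟨hab, rfl | rfl⟩
    · exact (hz b hab.symm).1
    · exact (hz a hab).1.symm

theorem IsStarCenter.nonempty_iso {H : SimpleGraph β} {z : α} {z' : β} (hz : G.IsStarCenter z)
    (hz' : H.IsStarCenter z') (e : α ≃ β) (he : e z = z') : Nonempty (G ≃g H) :=
  ⟨⟨e, by intro a b; rw [hz.adj_iff, hz'.adj_iff, ← he]; simp [e.injective.eq_iff]⟩⟩

theorem isStarCenter_pathGraph_three : (pathGraph 3).IsStarCenter 1 := by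
  simp only [IsStarCenter, pathGraph_adj]
  decide

theorem IsStarCenter.card_ne_three [Fintype α] {z : α} (hz : G.IsStarCenter z)
    (h3 : ¬ Nonempty (G ≃g pathGraph 3)) : Fintype.card α ≠ 3 := by
  intro hn
  let e := Fintype.equivFinOfCardEq hn
  exact h3 (hz.nonempty_iso isStarCenter_pathGraph_three (e.trans (Equiv.swap (e z) 1))
    (by simp))

theorem Connected.exists_isStarCenter_or_forall_path (hconn : G.Connected) :
    (∃ z, G.IsStarCenter z) ∨ ∀ t, ∃ u w, G.Adj t u ∧ G.Adj u w ∧ w ≠ t := by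
  by_contra! h
  obtain ⟨hstar, t, ht⟩ := h
  have hreach : ∀ a b, G.Walk a b → (a = t ∨ G.Adj t a) → b = t ∨ G.Adj t b := by
    intro a b p
    induction p with
    | nil => exact id
    | cons h' _ ih =>
      rintro (rfl | ha)
      · exact ih (Or.inr h')
      · exact ih (Or.inl (ht _ _ ha h'))
  refine hstar t fun v hv => ?_
  obtain ⟨p⟩ := hconn.preconnected t v
  have htv : G.Adj t v := (hreach t v p (Or.inl rfl)).resolve_left hv
  exact ⟨htv, fun w hw => ht v w htv hw⟩

end SimpleGraph

def ProperPartialColoring {α β : Type*} (G : SimpleGraph α) (col : α → Option β) : Prop :=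
  ∀ ⦃a b⦄, G.Adj a b → ∀ c, col a = some c → col b ≠ some c

theorem ProperPartialColoring.update {α β : Type*} [DecidableEq α] {G : SimpleGraph α}
    {col : α → Option β} (hpr : ProperPartialColoring G col) {v : α} {c : β}
    (hc : ∀ u, G.Adj v u → col u ≠ some c) :
    ProperPartialColoring G (Function.update col v (some c)) := by
  intro a b hab d ha hb
  rcases eq_or_ne a v with rfl | hav
  · rw [Function.update_self, Option.some_inj] at ha
    rw [Function.update_of_ne hab.ne'] at hb
    exact hc b hab (ha ▸ hb)
  · rw [Function.update_of_ne hav] at ha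
    rcases eq_or_ne b v with rfl | hbv
    · rw [Function.update_self, Option.some_inj] at hb
      exact hc a hab.symm (hb ▸ ha)
    · rw [Function.update_of_ne hbv] at hb
      exact hpr hab d ha hb

section Legal

variable {α : Type} {G : SimpleGraph α} {k : ℕ}

theorem not_legal_of_three_colors {s : EGState α 3} {u x y : α} {a b c : Fin 3}
    (hx : G.Adj u x) (hy : G.Adj u y) (hu : s.col u = some a) (hxc : s.col x = some b)
    (hyc : s.col y = some c) (hab : a ≠ b) (hac : a ≠ c) (hbc : b ≠ c) (d : Fin 3) :
    ¬ EGLegal G s u d := by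
  rintro ⟨-, hdu, hdn⟩
  rcases fin_three_eq_or_eq_or_eq a b c d hab hac hbc with rfl | rfl | rfl
  · exact hdu hu
  · exact hdn x hx hxc
  · exact hdn y hy hyc

theorem EGLegal.col_eq_of_adj {s : EGState α 3} {x u t : α} {c d e : Fin 3}
    (hleg : EGLegal G s x c) (hpr : ProperPartialColoring G s.col) (hcol : ∀ v, s.col v ≠ none)
    (hx : s.col x = some d) (hu : G.Adj x u) (he : s.col u = some e) (ht : G.Adj x t) :
    s.col t = some e := by
  obtain ⟨f, hf⟩ := Option.ne_none_iff_exists'.1 (hcol t)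
  rw [hf, fin_three_eq_of_ne d c f e (fun h => hleg.2.1 (h ▸ hx))
    (fun h => hpr ht d hx (h ▸ hf)) (fun h => hleg.2.2 t ht (h ▸ hf))
    (fun h => hpr hu d hx (h ▸ he)) (fun h => hleg.2.2 u hu (h ▸ he))]

theorem SimpleGraph.IsStarCenter.egLegal {s : EGState α k} {z l : α} {c : Fin k}
    (hz : G.IsStarCenter z) (hl : l ≠ z) (hlp : l ∉ s.played) (hcol : s.col l = none)
    (hc : s.col z ≠ some c) : EGLegal G s l c :=
  ⟨hlp, by simp [hcol], fun w hw => (hz l hl).2 w hw ▸ hc⟩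

end Legal

section Game

variable {G : SimpleGraph V} {k : ℕ} {s : EGState V k} {v : V} {c : Fin k}

@[simp]
theorem EGStep_col : (EGStep s v c).col = Function.update s.col v (some c) := rfl

@[simp]
theorem EGStep_aliceTurn : (EGStep s v c).aliceTurn = !s.aliceTurn := rfl

theorem EGStep_played_of_ne (h : insert v s.played ≠ univ) :
    (EGStep s v c).played = insert v s.played :=
  if_neg h

theorem EGStep_played_of_eq (h : insert v s.played = univ) : (EGStep s v c).played = ∅ :=
  if_pos h

theorem EGStep_played_of_notMem {w : V} (hw : w ∉ insert v s.played) :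
    (EGStep s v c).played = insert v s.played :=
  EGStep_played_of_ne fun h => hw (h ▸ mem_univ w)

theorem EGStep_col_of_mem {a : V} (ha : a ∈ s.played) (hv : v ∉ s.played) :
    (EGStep s v c).col a = s.col a :=
  Function.update_of_ne (ne_of_mem_of_not_mem ha hv) _ _

theorem EGStep_col_ne_none (hcol : ∀ w, s.col w ≠ none) (w : V) :
    (EGStep s v c).col w ≠ none := by
  rcases eq_or_ne w v with rfl | hw <;> simp [*]

theorem EGSurvives.mono {m n : ℕ} (hmn : m ≤ n) (h : EGSurvives G n s) : EGSurvives G m s := by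
  induction m generalizing n s with
  | zero => trivial
  | succ m ih =>
    obtain ⟨n, rfl⟩ : ∃ n', n = n' + 1 := ⟨n - 1, by omega⟩
    unfold EGSurvives at h ⊢
    split_ifs at h ⊢
    · obtain ⟨v, c, hleg, hs⟩ := h
      exact ⟨v, c, hleg, ih (by omega) hs⟩
    · exact ⟨h.1, fun v c hleg => ih (by omega) (h.2 v c hleg)⟩

def BobWins (G : SimpleGraph V) (s : EGState V k) : Prop :=
  ∃ n, ¬ EGSurvives G n s

theorem BobWins.eventually (h : BobWins G s) : ∀ᶠ n in atTop, ¬ EGSurvives G n s :=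
  let ⟨n, hn⟩ := h
  eventually_atTop.2 ⟨n, fun _ hm hs => hn (hs.mono hm)⟩

theorem bobWins_of_not_legal (hturn : s.aliceTurn = false) (hv : v ∉ s.played)
    (hstuck : ∀ c, ¬ EGLegal G s v c) : BobWins G s :=
  ⟨1, by simpa [EGSurvives, hturn] using ⟨v, hv, hstuck⟩⟩

theorem bobWins_of_bobMove (hturn : s.aliceTurn = false) (hleg : EGLegal G s v c)
    (h : BobWins G (EGStep s v c)) : BobWins G s :=
  let ⟨n, hn⟩ := h
  ⟨n + 1, by
    simp only [EGSurvives, hturn, Bool.false_eq_true, if_false]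
    exact fun h => hn (h.2 v c hleg)⟩

/-- Alice has finitely many moves, so Bob's bounds against them have a maximum. -/
theorem bobWins_of_aliceTurn (hturn : s.aliceTurn = true)
    (h : ∀ v c, EGLegal G s v c → BobWins G (EGStep s v c)) : BobWins G s := by
  have : ∀ᶠ n in atTop, ∀ p : V × Fin k,
      EGLegal G s p.1 p.2 → ¬ EGSurvives G n (EGStep s p.1 p.2) := by
    refine eventually_all.2 fun p => ?_
    by_cases hp : EGLegal G s p.1 p.2
    · exact (h _ _ hp).eventually.mono fun _ hn _ => hn
    · exact Eventually.of_forall fun _ h => absurd h hp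
  obtain ⟨n, hn⟩ := this.exists
  refine ⟨n + 1, ?_⟩
  simp only [EGSurvives, hturn, if_true]
  rintro ⟨v, c, hleg, hs⟩
  exact hn (v, c) hleg hs

theorem not_aliceWinsEG_of_bobWins (h : BobWins G (EGInit V k)) : ¬ AliceWinsEG G k :=
  fun hA => h.elim fun n hn => hn (hA n)

end Game

section Rounds

variable {G : SimpleGraph V} {k : ℕ} {a : Bool} {s : EGState V k} {v : V} {c : Fin k}

structure RoundInv (G : SimpleGraph V) (a : Bool) (s : EGState V k) : Prop where
  colored : ∀ v ∈ s.played, s.col v ≠ none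
  proper : ProperPartialColoring G s.col
  turn : s.aliceTurn = a ↔ Even #s.played
  ne_univ : s.played ≠ univ

structure RoundStart (G : SimpleGraph V) (s : EGState V k) : Prop where
  played_eq : s.played = ∅
  colored : ∀ v, s.col v ≠ none
  proper : ProperPartialColoring G s.col

theorem roundInv_init {α : Type} [Fintype α] [Nonempty α] {G : SimpleGraph α} :
    RoundInv G true (EGInit α k) where
  colored := by simp [EGInit]
  proper := fun _ _ _ _ h => by simp [EGInit] at h
  turn := by simp [EGInit]
  ne_univ := univ_nonempty.ne_empty.symm

theorem RoundStart.roundInv {α : Type} [Fintype α] [Nonempty α] {G : SimpleGraph α}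
    {s : EGState α k} (hs : RoundStart G s) : RoundInv G s.aliceTurn s where
  colored v _ := hs.colored v
  proper := hs.proper
  turn := by simp [hs.played_eq]
  ne_univ := hs.played_eq ▸ univ_nonempty.ne_empty.symm

theorem RoundInv.step (hs : RoundInv G a s) (hleg : EGLegal G s v c)
    (hne : insert v s.played ≠ univ) : RoundInv G a (EGStep s v c) where
  colored w hw := by
    rw [EGStep_played_of_ne hne, mem_insert] at hw
    rcases eq_or_ne w v with rfl | hwv
    · simp
    · simpa [hwv] using hs.colored w (hw.resolve_left hwv)
  proper := hs.proper.update hleg.2.2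
  turn := by
    rw [EGStep_played_of_ne hne, card_insert_of_notMem hleg.1, Nat.even_add_one, ← hs.turn,
      EGStep_aliceTurn, Bool.not_eq_eq_eq_not, Bool.eq_not]
  ne_univ := by rw [EGStep_played_of_ne hne]; exact hne

theorem RoundInv.reset (hs : RoundInv G a s) (hleg : EGLegal G s v c)
    (hres : insert v s.played = univ) :
    RoundStart G (EGStep s v c) ∧ ((EGStep s v c).aliceTurn = a ↔ Even (Fintype.card V)) := by
  have hcard : #s.played + 1 = Fintype.card V := by
    rw [← card_insert_of_notMem hleg.1, hres, card_univ]
  refine ⟨⟨EGStep_played_of_eq hres, fun w => ?_, hs.proper.update hleg.2.2⟩, ?_⟩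
  · rcases eq_or_ne w v with rfl | hwv
    · simp
    · have hw : w ∈ s.played := (mem_insert.1 (hres ▸ mem_univ w)).resolve_left hwv
      simpa [hwv] using hs.colored w hw
  · rw [← hcard, Nat.even_add_one, ← hs.turn, EGStep_aliceTurn, Bool.not_eq_eq_eq_not,
      Bool.eq_not]

/-- Bob plays arbitrary legal moves until the round ends. -/
theorem RoundInv.bobWins (P : EGState V k → Prop)
    (hP : ∀ s v c, RoundInv G a s → P s → EGLegal G s v c → insert v s.played ≠ univ →
      P (EGStep s v c))
    (hreset : ∀ s v c, RoundInv G a s → P s → EGLegal G s v c → insert v s.played = univ →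
      BobWins G (EGStep s v c))
    (hs : RoundInv G a s) (hPs : P s) : BobWins G s := by
  obtain ⟨m, hm⟩ : ∃ m, Fintype.card V ≤ #s.played + m := ⟨Fintype.card V, by omega⟩
  induction m generalizing s with
  | zero => exact absurd (eq_univ_of_card _ (le_antisymm (card_le_univ _) hm)) hs.ne_univ
  | succ m ih =>
    have hmove : ∀ v c, EGLegal G s v c → BobWins G (EGStep s v c) := fun v c hleg => by
      by_cases hres : insert v s.played = univ
      · exact hreset s v c hs hPs hleg hres
      · refine ih (hs.step hleg hres) (hP s v c hs hPs hleg hres) ?_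
        rw [EGStep_played_of_ne hres, card_insert_of_notMem hleg.1]
        omega
    cases hturn : s.aliceTurn
    · obtain ⟨v, hv⟩ := not_forall.1 fun h => hs.ne_univ (eq_univ_iff_forall.2 h)
      by_cases hc : ∃ c, EGLegal G s v c
      · obtain ⟨c, hleg⟩ := hc
        exact bobWins_of_bobMove hturn hleg (hmove v c hleg)
      · exact bobWins_of_not_legal hturn hv (not_exists.1 hc)
    · exact bobWins_of_aliceTurn hturn hmove

theorem RoundInv.bobWins_of_roundStart (hs : RoundInv G a s)
    (hkill : ∀ s : EGState V k, RoundStart G s →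
      (s.aliceTurn = a ↔ Even (Fintype.card V)) → BobWins G s) :
    BobWins G s :=
  hs.bobWins (fun _ => True) (fun _ _ _ _ _ _ _ => trivial)
    (fun _ _ _ hs _ hleg hres => hkill _ (hs.reset hleg hres).1 (hs.reset hleg hres).2) trivial

end Rounds

theorem RoundStart.not_legal_of_le_two {α : Type} {G : SimpleGraph α} {k : ℕ} {s : EGState α k}
    (hs : RoundStart G s) (hk : k ≤ 2) {u v : α} (hvu : G.Adj v u) (c : Fin k) :
    ¬ EGLegal G s v c := by
  rintro ⟨-, hcv, hcu⟩
  obtain ⟨a, ha⟩ := Option.ne_none_iff_exists'.1 (hs.colored v)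
  obtain ⟨b, hb⟩ := Option.ne_none_iff_exists'.1 (hs.colored u)
  have hab : a ≠ b := fun h => hs.proper hvu a ha (h ▸ hb)
  rcases fin_eq_or_eq_of_le_two hk hab c with rfl | rfl
  · exact hcv ha
  · exact hcu u hvu hb

theorem bobWins_of_le_two [Nonempty V] {G : SimpleGraph V} {k : ℕ} (hk : k ≤ 2)
    (hadj : ∀ v, ∃ u, G.Adj v u) : BobWins G (EGInit V k) := by
  refine roundInv_init.bobWins_of_roundStart fun s hs _ => ?_
  have hstuck : ∀ v c, ¬ EGLegal G s v c := fun v =>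
    let ⟨_, hu⟩ := hadj v
    hs.not_legal_of_le_two hk hu
  cases hturn : s.aliceTurn
  · exact bobWins_of_not_legal hturn (v := Classical.arbitrary V) (by simp [hs.played_eq])
      (hstuck _)
  · exact bobWins_of_aliceTurn hturn fun v c h => (hstuck v c h).elim

section ThreeColors

variable {G : SimpleGraph V} {s : EGState V 3}

theorem bobWins_of_recolor_neighbor (hturn : s.aliceTurn = false) (hcol : ∀ v, s.col v ≠ none)
    (hpr : ProperPartialColoring G s.col) {u w : V} (hu : u ∉ s.played) (hw : w ∉ s.played)
    (huw : G.Adj u w) (hnbr : ∀ v ∉ s.played, ∃ t, G.Adj u t ∧ t ≠ w ∧ t ≠ v) :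
    BobWins G s := by
  by_cases hcu : ∃ c, EGLegal G s u c
  swap
  · exact bobWins_of_not_legal hturn hu (not_exists.1 hcu)
  by_cases hcw : ∃ c, EGLegal G s w c
  swap
  · exact bobWins_of_not_legal hturn hw (not_exists.1 hcw)
  obtain ⟨cu, hcu⟩ := hcu
  obtain ⟨cw, hcw⟩ := hcw
  obtain ⟨du, hdu⟩ := Option.ne_none_iff_exists'.1 (hcol u)
  obtain ⟨dw, hdw⟩ := Option.ne_none_iff_exists'.1 (hcol w)
  -- as `u` and `w` can still be recolored, each sees a single color on its neighbors
  have hnbr_u : ∀ t, G.Adj u t → s.col t = some dw := fun _ =>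
    hcu.col_eq_of_adj hpr hcol hdu huw hdw
  have hleg : EGLegal G s w cu := ⟨hw, hcu.2.2 w huw, fun x hx =>
    hcw.col_eq_of_adj hpr hcol hdw huw.symm hdu hx ▸ hdu ▸ hcu.2.1⟩
  have hblocked : ∀ (s' : EGState V 3) t, G.Adj u t → s'.col u = some du →
      s'.col w = some cu → s'.col t = some dw → ∀ d, ¬ EGLegal G s' u d :=
    fun s' t hut h₁ h₂ h₃ => not_legal_of_three_colors huw hut h₁ h₂ h₃
      (fun h => hcu.2.1 (h ▸ hdu)) (fun h => hpr huw du hdu (h ▸ hdw))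
      (fun h => hcu.2.2 w huw (h ▸ hdw))
  have hp₁ : (EGStep s w cu).played = insert w s.played :=
    EGStep_played_of_notMem (w := u) (by simp [hu, huw.ne])
  refine bobWins_of_bobMove hturn hleg
    (bobWins_of_aliceTurn (by simp [hturn]) fun v c hleg' => ?_)
  have hv : v ≠ w ∧ v ∉ s.played := by simpa [hp₁] using hleg'.1
  obtain ⟨t, hut, htw, htv⟩ := hnbr v hv.2
  have hvu : v ≠ u := by
    rintro rfl
    exact hblocked _ t hut (by simp [huw.ne, hdu]) (by simp) (by simp [htw, hnbr_u t hut]) c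
      hleg'
  refine bobWins_of_not_legal (by simp [hturn]) ?_ (hblocked _ t hut ?_ ?_ ?_)
  · rw [EGStep_played_of_notMem (w := u) (by simp [hp₁, hu, huw.ne, hvu.symm])]
    simp [hp₁, hu, huw.ne, hvu.symm]
  · simp [hvu.symm, huw.ne, hdu]
  · simp [hv.1.symm]
  · simp [htv, htw, hnbr_u t hut]

theorem RoundStart.bobWins_of_path (hs : RoundStart G s) (hturn : s.aliceTurn = true)
    (hpath : ∀ t c, EGLegal G s t c → ∃ u w, G.Adj t u ∧ G.Adj u w ∧ w ≠ t) :
    BobWins G s := by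
  refine bobWins_of_aliceTurn hturn fun t c hleg => ?_
  obtain ⟨u, w, htu, huw, hwt⟩ := hpath t c hleg
  have hp : (EGStep s t c).played = {t} := by
    rw [EGStep_played_of_notMem (w := u) (by simp [hs.played_eq, htu.ne']), hs.played_eq]
    rfl
  refine bobWins_of_recolor_neighbor (by simp [hturn]) (EGStep_col_ne_none hs.colored)
    (hs.proper.update hleg.2.2) (by simp [hp, htu.ne']) (by simp [hp, hwt]) huw
    fun v hv => ⟨t, htu.symm, hwt.symm, ?_⟩
  simpa [hp, eq_comm] using hv

theorem RoundStart.bobWins_of_isStarCenter_of_aliceTurn (hs : RoundStart G s)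
    (hturn : s.aliceTurn = true) {z : V} (hz : G.IsStarCenter z) (hn : 3 ≤ Fintype.card V)
    {a b : V} (ha : a ≠ z) (hb : b ≠ z) (hab : s.col a ≠ s.col b) : BobWins G s := by
  refine hs.bobWins_of_path hturn fun t c hleg => ?_
  have htz : t ≠ z := by
    rintro rfl
    obtain ⟨dt, hdt⟩ := Option.ne_none_iff_exists'.1 (hs.colored t)
    obtain ⟨da, hda⟩ := Option.ne_none_iff_exists'.1 (hs.colored a)
    obtain ⟨db, hdb⟩ := Option.ne_none_iff_exists'.1 (hs.colored b)
    exact not_legal_of_three_colors (hz a ha).1 (hz b hb).1 hdt hda hdb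
      (fun h => hs.proper (hz a ha).1 dt hdt (h ▸ hda))
      (fun h => hs.proper (hz b hb).1 dt hdt (h ▸ hdb)) (fun h => hab (by rw [hda, hdb, h]))
      c hleg
  obtain ⟨p, hp⟩ := exists_notMem_of_card_lt (s := {z, t}) (card_le_two.trans_lt (by omega))
  simp only [mem_insert, mem_singleton, not_or] at hp
  exact ⟨z, p, (hz t htz).1.symm, (hz p hp.1).1, hp.2⟩

theorem RoundStart.bobWins_of_isStarCenter_of_bobTurn (hs : RoundStart G s)
    (hturn : s.aliceTurn = false) {z : V} (hz : G.IsStarCenter z) (hn : 4 ≤ Fintype.card V) :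
    BobWins G s := by
  obtain ⟨p, hp⟩ := exists_notMem_of_card_lt (s := {z}) (by simp; omega)
  rw [mem_singleton] at hp
  refine bobWins_of_recolor_neighbor hturn hs.colored hs.proper (by simp [hs.played_eq])
    (by simp [hs.played_eq]) (hz p hp).1 fun v _ => ?_
  obtain ⟨t, ht⟩ :=
    exists_notMem_of_card_lt (s := {z, p, v}) (card_le_three.trans_lt (by omega))
  simp only [mem_insert, mem_singleton, not_or] at ht
  exact ⟨t, (hz t ht.1).1, ht.2.1, ht.2.2⟩

theorem RoundInv.bobWins_step_of_isStarCenter (hs : RoundInv G true s) {z : V}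
    (hz : G.IsStarCenter z) (hn : 4 ≤ Fintype.card V) (he : Even (Fintype.card V)) {v : V}
    {c : Fin 3} (hleg : EGLegal G s v c) {a b : V} (ha : a ∈ insert v s.played)
    (hb : b ∈ insert v s.played) (haz : a ≠ z) (hbz : b ≠ z)
    (hab : (EGStep s v c).col a ≠ (EGStep s v c).col b) : BobWins G (EGStep s v c) := by
  by_cases hres : insert v s.played = univ
  · obtain ⟨hs', hturn⟩ := hs.reset hleg hres
    exact hs'.bobWins_of_isStarCenter_of_aliceTurn (hturn.2 he) hz (by omega) haz hbz hab
  let P : EGState V 3 → Prop := fun s =>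
    ∃ a ∈ s.played, ∃ b ∈ s.played, a ≠ z ∧ b ≠ z ∧ s.col a ≠ s.col b
  refine RoundInv.bobWins P ?_ ?_ (hs.step hleg hres)
    ⟨a, by rwa [EGStep_played_of_ne hres], b, by rwa [EGStep_played_of_ne hres], haz, hbz, hab⟩
  · rintro s v c - ⟨a, ha, b, hb, haz, hbz, hab⟩ hleg hne
    refine ⟨a, ?_, b, ?_, haz, hbz, ?_⟩
    · simp [EGStep_played_of_ne hne, ha]
    · simp [EGStep_played_of_ne hne, hb]
    · rwa [EGStep_col_of_mem ha hleg.1, EGStep_col_of_mem hb hleg.1]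
  · rintro s v c hs ⟨a, ha, b, hb, haz, hbz, hab⟩ hleg hres
    obtain ⟨hs', hturn⟩ := hs.reset hleg hres
    refine hs'.bobWins_of_isStarCenter_of_aliceTurn (hturn.2 he) hz (by omega) haz hbz ?_
    rwa [EGStep_col_of_mem ha hleg.1, EGStep_col_of_mem hb hleg.1]

/-- Alice opened on the center and Bob answered on the leaf `l`. If Alice copies Bob's color on
another leaf, Bob puts the third color on a fresh leaf. -/
theorem RoundInv.bobWins_of_played_eq_pair (hs : RoundInv G true s) (hturn : s.aliceTurn = true)
    {z : V} (hz : G.IsStarCenter z) (hn : 4 ≤ Fintype.card V) (he : Even (Fintype.card V))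
    {l : V} (hl : l ≠ z) (hp : s.played = {l, z}) (hnone : ∀ x ∉ s.played, s.col x = none)
    {c₁ c : Fin 3} (hzc : s.col z = some c₁) (hlc : s.col l = some c) :
    BobWins G s := by
  refine bobWins_of_aliceTurn hturn fun v c₃ hleg => ?_
  have hv : v ≠ l ∧ v ≠ z := by simpa [hp] using hleg.1
  by_cases hc₃ : c₃ = c
  swap
  · exact hs.bobWins_step_of_isStarCenter hz hn he hleg (a := l) (b := v) (by simp [hp])
      (by simp) hl hv.2 (by simp [Ne.symm hv.1, hlc, Ne.symm hc₃])
  obtain ⟨l', hl'⟩ :=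
    exists_notMem_of_card_lt (s := {z, l, v}) (card_le_three.trans_lt (by omega))
  simp only [mem_insert, mem_singleton, not_or] at hl'
  obtain ⟨c', hc'₁, hc'⟩ := fin_three_exists_ne_ne c₁ c
  have hne : insert v s.played ≠ univ := fun h => by
    have : l' ∈ insert v s.played := h ▸ mem_univ l'
    simp [hp, hl'] at this
  have hleg' : EGLegal G (EGStep s v c₃) l' c' :=
    hz.egLegal hl'.1 (by simp [EGStep_played_of_ne hne, hp, hl'])
      (by simp [hl'.2.2, hnone l' (by simp [hp, hl'])]) (by simp [Ne.symm hv.2, hzc, hc'₁.symm])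
  refine bobWins_of_bobMove (by simp [hturn]) hleg' <|
    (hs.step hleg hne).bobWins_step_of_isStarCenter hz hn he hleg' (a := l) (b := l')
      (by simp [EGStep_played_of_ne hne, hp]) (by simp) hl hl'.1 ?_
  simp [Ne.symm hv.1, Ne.symm hl'.2.1, hlc, hc'.symm]

theorem bobWins_three_of_forall_path [Nonempty V]
    (hpath : ∀ t, ∃ u w, G.Adj t u ∧ G.Adj u w ∧ w ≠ t) : BobWins G (EGInit V 3) := by
  have hkill : ∀ s : EGState V 3, RoundStart G s → s.aliceTurn = true → BobWins G s :=
    fun s hs hturn => hs.bobWins_of_path hturn fun t _ _ => hpath t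
  refine roundInv_init.bobWins_of_roundStart fun s hs hturn => ?_
  cases hturn' : s.aliceTurn
  · -- `|V|` is odd, so Bob opens the second round and Alice the third
    have hodd : ¬ Even (Fintype.card V) := by simpa [hturn'] using hturn
    refine (hturn' ▸ hs.roundInv).bobWins_of_roundStart fun s' hs' hturn'' => hkill s' hs' ?_
    simpa [hodd] using hturn''
  · exact hkill s hs hturn'

theorem bobWins_three_of_isStarCenter_of_odd [Nonempty V] {z : V} (hz : G.IsStarCenter z)
    (hn : 4 ≤ Fintype.card V) (hodd : Odd (Fintype.card V)) : BobWins G (EGInit V 3) :=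
  roundInv_init.bobWins_of_roundStart fun _ hs hturn =>
    hs.bobWins_of_isStarCenter_of_bobTurn (by simpa [Nat.not_even_iff_odd.2 hodd] using hturn)
      hz hn

/-- Bob answers Alice's opening move by coloring a leaf differently. -/
theorem bobWins_three_of_isStarCenter_of_even [Nonempty V] {z : V} (hz : G.IsStarCenter z)
    (hn : 4 ≤ Fintype.card V) (he : Even (Fintype.card V)) : BobWins G (EGInit V 3) := by
  refine bobWins_of_aliceTurn rfl fun v c₁ h₁ => ?_
  obtain ⟨l, hl⟩ := exists_notMem_of_card_lt (s := {z, v}) (card_le_two.trans_lt (by omega))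
  simp only [mem_insert, mem_singleton, not_or] at hl
  obtain ⟨c, hc, -⟩ := fin_three_exists_ne_ne c₁ c₁
  set s₁ := EGStep (EGInit V 3) v c₁
  have hp₁ : s₁.played = {v} := EGStep_played_of_notMem (w := l) (by simp [EGInit, hl.2])
  have hs₁ : RoundInv G true s₁ :=
    roundInv_init.step h₁ fun h => hl.2 (by simpa [EGInit, ← h] using mem_univ l)
  have hleg : EGLegal G s₁ l c :=
    hz.egLegal hl.1 (by simp [hp₁, hl.2]) (by simp [s₁, EGInit, hl.2])
      (by simpa [s₁, EGInit, Function.update_apply] using fun _ => hc.symm)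
  refine bobWins_of_bobMove rfl hleg ?_
  by_cases hv : v = z
  · subst hv
    have hne : insert l s₁.played ≠ univ := by
      rw [hp₁]
      exact (card_lt_iff_ne_univ _).1 (card_le_two.trans_lt (by omega))
    have hp₂ : (EGStep s₁ l c).played = {l, v} := by rw [EGStep_played_of_ne hne, hp₁]
    refine (hs₁.step hleg hne).bobWins_of_played_eq_pair rfl hz hn he hl.1 hp₂ ?_
      (c₁ := c₁) (c := c) (by simp [s₁, Ne.symm hl.1]) (by simp)
    intro x hx
    simp only [hp₂, mem_insert, mem_singleton, not_or] at hx
    simp [s₁, EGInit, hx.1, hx.2]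
  · exact hs₁.bobWins_step_of_isStarCenter hz hn he hleg (a := v) (b := l) (by simp [hp₁])
      (by simp) hv hl.1 (by simp [s₁, Ne.symm hl.2, hc.symm])

end ThreeColors

/-- Every finite connected graph other than K_1, K_2, P_3 has χ_g^∞(G) > 3:
Bob wins with at most 3 colors. -/
theorem eternal_game_chromatic_gt_three
    {V : Type} [Fintype V] [DecidableEq V] (G : SimpleGraph V)
    (hconn : G.Connected)
    (h1 : ¬ Nonempty (G ≃g (⊤ : SimpleGraph (Fin 1))))
    (h2 : ¬ Nonempty (G ≃g (⊤ : SimpleGraph (Fin 2))))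
    (h3 : ¬ Nonempty (G ≃g pathGraph 3)) :
    ∀ k, k ≤ 3 → ¬ AliceWinsEG G k := by
  intro k hk
  have hcard := hconn.three_le_card h1 h2
  have : Nonempty V := hconn.nonempty
  have : Nontrivial V := Fintype.one_lt_card_iff_nontrivial.1 (by omega)
  refine not_aliceWinsEG_of_bobWins ?_
  obtain hk | rfl : k ≤ 2 ∨ k = 3 := by omega
  · exact bobWins_of_le_two hk hconn.preconnected.exists_adj_of_nontrivial
  rcases hconn.exists_isStarCenter_or_forall_path with ⟨z, hz⟩ | hpath
  · have hcard4 : 4 ≤ Fintype.card V := by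
      have := hz.card_ne_three h3
      omega
    rcases Nat.even_or_odd (Fintype.card V) with he | ho
    · exact bobWins_three_of_isStarCenter_of_even hz hcard4 he
    · exact bobWins_three_of_isStarCenter_of_odd hz hcard4 ho
  · exact bobWins_three_of_forall_path hpath
end

section
/- In the Greedy Coloring Game played eternally on the star K_{1,n}: if n is odd then χ_g^{∞2}(K_{1,n}) = 3, and if n ≥ 4 is even then χ_g^{∞2}(K_{1,n}) = 4. -/
open SimpleGraph

variable {V : Type} [Fintype V] [DecidableEq V]

/-- In the Greedy Coloring Game, Bob must use the smallest-indexed legal color on the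
vertex he chooses. -/
def EGLegalBobGreedy (G : SimpleGraph V) {k : ℕ} (s : EGState V k) (v : V) (c : Fin k) : Prop :=
  EGLegal G s v c ∧ ∀ c', c' < c → ¬ EGLegal G s v c'

/-- Survival in the eternal Greedy Coloring Game. -/
def EGSurvivesGreedy (G : SimpleGraph V) {k : ℕ} : ℕ → EGState V k → Prop
  | 0, _ => True
  | n + 1, s =>
      if s.aliceTurn then
        ∃ v c, EGLegal G s v c ∧ EGSurvivesGreedy G n (EGStep s v c)
      else
        (∀ v, v ∉ s.played → ∃ c, EGLegal G s v c) ∧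
          ∀ v c, EGLegalBobGreedy G s v c → EGSurvivesGreedy G n (EGStep s v c)

/-- Alice wins the eternal Greedy Coloring Game on `G` with `k` colors. -/
def AliceWinsEGGreedy (G : SimpleGraph V) (k : ℕ) : Prop :=
  ∀ n, EGSurvivesGreedy G n (EGInit V k)

/-!
During the first round every vertex is colored once, so after `|V|` moves, whatever is played,
the coloring is complete and proper. With at most two colors no vertex can then be recolored.
With three colors and `n` even the first round has odd length, so Bob opens the second one: if
the leaves carry two colors the center is already stuck; otherwise Bob recolors a leaf with the
third color, Alice can no longer recolor the center, and after any leaf move of hers the center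
sees all three colors on Bob's turn.

A round that starts with the center being recolored `c` is a sweep: all leaves then have the same
legal colors, so Alice and greedy Bob both recolor them with the least color `d ≠ c` other than
their old one, and the round ends with center `c` and all leaves `d`. For `n` odd every round has
even length and Alice opens it, recoloring the center with a color absent from the star, which
exists when `k ≥ 3`. For `n` even the opener alternates. Alice opens with the center in color 3,
so the leaves become 0; Bob's greedy move is then color 1, either on the center (a sweep to 2
follows) or on a leaf, after which Alice recolors the center 2 and the other leaves follow to 1.
-/

theorem exists_isLeast_setOf {α : Type*} [LinearOrder α] [WellFoundedLT α] {p : α → Prop}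
    (h : ∃ a, p a) : ∃ a, IsLeast {a | p a} a :=
  (exists_minimal_of_wellFoundedLT p h).imp fun _ => minimal_iff_isLeast.mp

theorem isLeast_setOf_iff {α : Type*} [LE α] {p : α → Prop} {a : α} :
    IsLeast {a | p a} a ↔ p a ∧ ∀ b, p b → a ≤ b :=
  Iff.rfl

theorem Fin.false_of_three_ne {k : ℕ} {x y z : Fin k} (hk : k ≤ 2) (hxy : x ≠ y)
    (hzx : z ≠ x) (hzy : z ≠ y) : False := by
  have := x.isLt; have := y.isLt; have := z.isLt
  rw [ne_eq, Fin.ext_iff] at hxy hzx hzy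
  omega

theorem Fin.exists_some_ne_some_ne {k : ℕ} (hk : 3 ≤ k) (a b : Option (Fin k)) :
    ∃ c : Fin k, a ≠ some c ∧ b ≠ some c := by
  by_contra! h
  have h0 := h ⟨0, by omega⟩
  have h1 := h ⟨1, by omega⟩
  have h2 := h ⟨2, by omega⟩
  cases a <;> cases b <;> simp_all [Fin.ext_iff]; omega

theorem Fin.eq_or_eq_or_eq_of_ne :
    ∀ {b x y : Fin 3} (c : Fin 3), b ≠ x → b ≠ y → x ≠ y →
      c = b ∨ c = x ∨ c = y := by
  decide

section Game

variable {k : ℕ} (G : SimpleGraph V)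

def AliceCanKeepIn (P : EGState V k → Prop) (s : EGState V k) : Prop :=
  if s.aliceTurn then ∃ v c, EGLegal G s v c ∧ P (EGStep s v c)
  else (∀ v, v ∉ s.played → ∃ c, EGLegal G s v c) ∧
    ∀ v c, EGLegalBobGreedy G s v c → P (EGStep s v c)

variable {G}

theorem AliceCanKeepIn.mono {P Q : EGState V k → Prop} (hPQ : ∀ s, P s → Q s)
    {s : EGState V k} (h : AliceCanKeepIn G P s) : AliceCanKeepIn G Q s := by
  unfold AliceCanKeepIn at h ⊢
  split_ifs at h ⊢
  · obtain ⟨v, c, hl, hP⟩ := h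
    exact ⟨v, c, hl, hPQ _ hP⟩
  · exact ⟨h.1, fun v c hg => hPQ _ (h.2 v c hg)⟩

theorem egSurvivesGreedy_of_forall_aliceCanKeepIn {P : EGState V k → Prop}
    (hP : ∀ s, P s → AliceCanKeepIn G P s) : ∀ m s, P s → EGSurvivesGreedy G m s
  | 0, _, _ => trivial
  | m + 1, s, hs => (hP s hs).mono (egSurvivesGreedy_of_forall_aliceCanKeepIn hP m)

omit [Fintype V] [DecidableEq V] in
theorem egLegalBobGreedy_iff_isLeast {s : EGState V k} {v : V} {c : Fin k} :
    EGLegalBobGreedy G s v c ↔ IsLeast {c | EGLegal G s v c} c :=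
  ⟨fun ⟨hc, hmin⟩ => ⟨hc, fun _ hc' => not_lt.mp fun hlt => hmin _ hlt hc'⟩,
    fun ⟨hc, hle⟩ => ⟨hc, fun _ hlt hc' => (hle hc').not_gt hlt⟩⟩

theorem not_aliceCanKeepIn_of_bob {P : EGState V k → Prop} {s : EGState V k}
    (hturn : s.aliceTurn = false) {v : V} (hv : v ∉ s.played)
    (h : ∀ c, EGLegal G s v c → ¬ P (EGStep s v c)) : ¬ AliceCanKeepIn G P s := by
  rw [AliceCanKeepIn, if_neg (by simp [hturn])]
  rintro ⟨hlegal, hbob⟩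
  obtain ⟨c, hc⟩ := exists_isLeast_setOf (hlegal v hv)
  exact h c hc.1 (hbob v c (egLegalBobGreedy_iff_isLeast.mpr hc))

theorem not_aliceCanKeepIn_of_alice {P : EGState V k → Prop} {s : EGState V k}
    (hturn : s.aliceTurn = true) (h : ∀ v c, EGLegal G s v c → ¬ P (EGStep s v c)) :
    ¬ AliceCanKeepIn G P s := by
  rw [AliceCanKeepIn, if_pos hturn]
  rintro ⟨v, c, hl, hP⟩
  exact h v c hl hP

theorem not_aliceCanKeepIn {P : EGState V k → Prop} {s : EGState V k} {v : V}
    (hv : v ∉ s.played) (h : ∀ v c, EGLegal G s v c → ¬ P (EGStep s v c)) :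
    ¬ AliceCanKeepIn G P s := by
  cases hturn : s.aliceTurn
  · exact not_aliceCanKeepIn_of_bob hturn hv (h v)
  · exact not_aliceCanKeepIn_of_alice hturn h

omit [Fintype V] [DecidableEq V] in
theorem EGState.ext {s s' : EGState V k} (hcol : ∀ v, s.col v = s'.col v)
    (hplayed : ∀ v, v ∈ s.played ↔ v ∈ s'.played) (hturn : s.aliceTurn = s'.aliceTurn) :
    s = s' := by
  cases s
  cases s'
  simp_all [funext_iff, Finset.ext_iff]

@[simp] theorem egStep_col (s : EGState V k) (v : V) (c : Fin k) :
    (EGStep s v c).col = Function.update s.col v (some c) :=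
  rfl

@[simp] theorem egStep_aliceTurn (s : EGState V k) (v : V) (c : Fin k) :
    (EGStep s v c).aliceTurn = !s.aliceTurn :=
  rfl

theorem mem_egStep_played {s : EGState V k} {v w : V} {c : Fin k} :
    w ∈ (EGStep s v c).played ↔
      insert v s.played ≠ Finset.univ ∧ (w = v ∨ w ∈ s.played) := by
  unfold EGStep
  split_ifs with h <;> simp [h]

end Game

section FirstRound

variable {k : ℕ} {G : SimpleGraph V}

variable (G) in
def EGProper (s : EGState V k) : Prop :=
  ∀ u v c, G.Adj u v → s.col u = some c → s.col v ≠ some c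

variable (G) in
def EGFirstRound (s : EGState V k) : Prop :=
  s.aliceTurn = decide (Even s.played.card) ∧ (∀ v, s.col v = none ↔ v ∉ s.played) ∧
    EGProper G s

variable (G) in
def EGFull (s : EGState V k) : Prop :=
  s.aliceTurn = decide (Even (Fintype.card V)) ∧ s.played = ∅ ∧ (∀ v, s.col v ≠ none) ∧
    EGProper G s

theorem EGProper.egStep {s : EGState V k} {v : V} {c : Fin k} (hs : EGProper G s)
    (hl : EGLegal G s v c) : EGProper G (EGStep s v c) := by
  intro x y e hxy hx
  rw [egStep_col] at hx ⊢
  by_cases hxv : x = v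
  · subst hxv
    rw [Function.update_self, Option.some_inj] at hx
    subst hx
    rw [Function.update_of_ne hxy.ne.symm]
    exact hl.2.2 y hxy
  · rw [Function.update_of_ne hxv] at hx
    by_cases hyv : y = v
    · subst hyv
      rw [Function.update_self]
      rintro ⟨⟩
      exact hl.2.2 x hxy.symm hx
    · rw [Function.update_of_ne hyv]
      exact hs x y e hxy hx

omit [Fintype V] [DecidableEq V] in
theorem egFirstRound_egInit : EGFirstRound G (EGInit V k) :=
  ⟨by simp [EGInit], by simp [EGInit], fun _ _ _ _ h => by simp [EGInit] at h⟩

theorem EGFirstRound.egStep {s : EGState V k} {v : V} {c : Fin k} (hs : EGFirstRound G s)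
    (hl : EGLegal G s v c) (hlt : s.played.card + 1 < Fintype.card V) :
    EGFirstRound G (EGStep s v c) ∧ (EGStep s v c).played.card = s.played.card + 1 := by
  have hcard : (insert v s.played).card = s.played.card + 1 := Finset.card_insert_of_notMem hl.1
  have hplayed : (EGStep s v c).played = insert v s.played := by
    refine if_neg fun h => ?_
    rw [← Finset.card_eq_iff_eq_univ] at h
    omega
  refine ⟨⟨?_, fun u => ?_, hs.2.2.egStep hl⟩, by rw [hplayed, hcard]⟩
  · rw [hplayed, hcard]
    simp [hs.1, Nat.even_add_one, -Nat.not_even_iff_odd]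
  · rw [hplayed]
    by_cases huv : u = v
    · subst huv
      simp
    · simp [huv, hs.2.1 u]

theorem EGFirstRound.egStep_of_last {s : EGState V k} {v : V} {c : Fin k}
    (hs : EGFirstRound G s) (hl : EGLegal G s v c)
    (hlast : s.played.card + 1 = Fintype.card V) : EGFull G (EGStep s v c) := by
  have hcard : (insert v s.played).card = s.played.card + 1 := Finset.card_insert_of_notMem hl.1
  have huniv : insert v s.played = Finset.univ := by
    rw [← Finset.card_eq_iff_eq_univ]
    omega
  refine ⟨?_, if_pos huniv, fun u => ?_, hs.2.2.egStep hl⟩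
  · simp [hs.1, ← hlast, Nat.even_add_one, -Nat.not_even_iff_odd]
  · by_cases huv : u = v
    · subst huv
      simp
    · have hu : u ∈ s.played := by
        simpa [huv] using Finset.eq_univ_iff_forall.mp huniv u
      simpa [Function.update_of_ne huv, hs.2.1 u] using hu

theorem EGFirstRound.not_egSurvivesGreedy {m : ℕ}
    (hfull : ∀ s : EGState V k, EGFull G s → ¬ EGSurvivesGreedy G m s) (d : ℕ)
    {s : EGState V k} (hs : EGFirstRound G s) (hcard : s.played.card + (d + 1) = Fintype.card V) :
    ¬ EGSurvivesGreedy G (m + d + 1) s := by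
  obtain ⟨v, -, hv⟩ :=
    Finset.exists_mem_notMem_of_card_lt_card (t := Finset.univ) (s := s.played) (by simp; omega)
  refine not_aliceCanKeepIn hv fun v c hl => ?_
  cases d with
  | zero => exact hfull _ (hs.egStep_of_last hl (by omega))
  | succ d =>
    obtain ⟨hs', hcard'⟩ := hs.egStep hl (by omega)
    exact EGFirstRound.not_egSurvivesGreedy hfull d hs' (by omega)

theorem not_aliceWinsEGGreedy_of_egFull [Nonempty V] {m : ℕ}
    (hfull : ∀ s : EGState V k, EGFull G s → ¬ EGSurvivesGreedy G m s) :
    ¬ AliceWinsEGGreedy G k := by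
  obtain ⟨d, hd⟩ := Nat.exists_eq_add_of_lt (Fintype.card_pos (α := V))
  exact fun h => egFirstRound_egInit.not_egSurvivesGreedy hfull d (by simp [EGInit, hd]) (h _)

theorem not_aliceWinsEGGreedy_of_le_two [Nonempty V] (hG : ∀ v, ∃ u, G.Adj v u) (hk : k ≤ 2) :
    ¬ AliceWinsEGGreedy G k := by
  refine not_aliceWinsEGGreedy_of_egFull (m := 1) fun s hs => ?_
  refine not_aliceCanKeepIn (v := Classical.arbitrary V) (by simp [hs.2.1]) fun v c hl _ => ?_
  obtain ⟨u, hvu⟩ := hG v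
  obtain ⟨b, hb⟩ := Option.ne_none_iff_exists'.mp (hs.2.2.1 v)
  obtain ⟨a, ha⟩ := Option.ne_none_iff_exists'.mp (hs.2.2.1 u)
  exact Fin.false_of_three_ne (x := b) (y := a) (z := c) hk
    (fun hba => hs.2.2.2 v u b hvu hb (by rw [ha, hba]))
    (fun hcb => hl.2.1 (by rw [hb, hcb])) (fun hca => hl.2.2 u hvu (by rw [ha, hca]))

end FirstRound

section Star

variable {n k : ℕ}

theorem egLegal_star_center_iff {s : EGState (Fin 1 ⊕ Fin n) k} {c : Fin k} :
    EGLegal (completeBipartiteGraph (Fin 1) (Fin n)) s (.inl 0) c ↔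
      .inl 0 ∉ s.played ∧ s.col (.inl 0) ≠ some c ∧ ∀ i, s.col (.inr i) ≠ some c := by
  simp [EGLegal, Sum.forall]

theorem egLegal_star_leaf_iff {s : EGState (Fin 1 ⊕ Fin n) k} {i : Fin n} {c : Fin k} :
    EGLegal (completeBipartiteGraph (Fin 1) (Fin n)) s (.inr i) c ↔
      .inr i ∉ s.played ∧ s.col (.inr i) ≠ some c ∧ s.col (.inl 0) ≠ some c := by
  simp [EGLegal, Sum.forall, Fin.fin_one_eq_zero]

/-- The center has color `cc` and was chosen this round iff `cp`; the leaves of `S` were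
recolored `new` this round, the others still have color `old`. -/
def starState (cc : Option (Fin k)) (cp : Bool) (S : Finset (Fin n)) (new old : Option (Fin k))
    (t : Bool) : EGState (Fin 1 ⊕ Fin n) k where
  col := Sum.elim (fun _ => cc) fun i => if i ∈ S then new else old
  played := (if cp then Finset.univ else ∅).disjSum S
  aliceTurn := t

section starState

variable {cc : Option (Fin k)} {cp t : Bool} {S : Finset (Fin n)} {new old : Option (Fin k)}

@[simp] theorem starState_col_inl (x : Fin 1) : (starState cc cp S new old t).col (.inl x) = cc :=
  rfl

@[simp] theorem starState_col_inr (i : Fin n) :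
    (starState cc cp S new old t).col (.inr i) = if i ∈ S then new else old :=
  rfl

@[simp] theorem inl_mem_starState_played (x : Fin 1) :
    .inl x ∈ (starState cc cp S new old t).played ↔ cp := by
  cases cp <;> simp [starState, Fin.fin_one_eq_zero]

@[simp] theorem inr_mem_starState_played (i : Fin n) :
    .inr i ∈ (starState cc cp S new old t).played ↔ i ∈ S := by
  simp [starState]

@[simp] theorem starState_aliceTurn : (starState cc cp S new old t).aliceTurn = t :=
  rfl

theorem starState_empty (new' : Option (Fin k)) :
    starState cc cp (∅ : Finset (Fin n)) new old t = starState cc cp ∅ new' old t := by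
  simp only [starState, Finset.notMem_empty, if_false]

theorem egInit_eq_starState :
    EGInit (Fin 1 ⊕ Fin n) k = starState none false ∅ none none true := by
  simp only [EGInit, starState, Finset.notMem_empty, if_false, Bool.false_eq_true,
    Finset.empty_disjSum, Finset.map_empty, EGState.mk.injEq, and_true]
  funext v
  cases v <;> rfl

theorem egStep_starState_center {c : Fin k} (hS : S ≠ Finset.univ) :
    EGStep (starState cc false S new old t) (.inl 0) c =
      starState (some c) true S new old (!t) := by
  have hne : insert (.inl 0) (starState cc false S new old t).played ≠ Finset.univ := fun h =>
    hS (Finset.eq_univ_iff_forall.mpr fun j => by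
      simpa using Finset.eq_univ_iff_forall.mp h (.inr j))
  refine EGState.ext (fun v => ?_) (fun v => ?_) rfl
  · rcases v with x | i
    · simp [Fin.fin_one_eq_zero]
    · simp
  · rcases v with x | i <;> simp [mem_egStep_played, hne, Fin.fin_one_eq_zero]

theorem egStep_starState_leaf {i : Fin n} {c : Fin k}
    (hS : cp = false ∨ insert i S ≠ Finset.univ) :
    EGStep (starState cc cp S (some c) old t) (.inr i) c =
      starState cc cp (insert i S) (some c) old (!t) := by
  have hne : insert (.inr i) (starState cc cp S (some c) old t).played ≠ Finset.univ := by
    intro h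
    rcases hS with rfl | hS
    · simpa using Finset.eq_univ_iff_forall.mp h (.inl 0)
    · exact hS (Finset.eq_univ_iff_forall.mpr fun j => by
        simpa using Finset.eq_univ_iff_forall.mp h (.inr j))
  refine EGState.ext (fun v => ?_) (fun v => ?_) rfl
  · rcases v with x | j
    · simp
    · by_cases hj : j = i <;> simp [hj]
  · rcases v with x | j <;> simp [mem_egStep_played, hne]

theorem egStep_starState_leaf_of_last {i : Fin n} {c : Fin k} (hS : insert i S = Finset.univ) :
    EGStep (starState cc true S (some c) old t) (.inr i) c =
      starState cc false ∅ (some c) (some c) (!t) := by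
  have hS' : ∀ j, j ≠ i → j ∈ S := fun j hj => by
    simpa [hj] using Finset.eq_univ_iff_forall.mp hS j
  have heq : insert (.inr i) (starState cc true S (some c) old t).played = Finset.univ := by
    refine Finset.eq_univ_iff_forall.mpr ?_
    rintro (x | j)
    · simp
    · by_cases hj : j = i <;> simp [hj, hS']
  refine EGState.ext (fun v => ?_) (fun v => ?_) rfl
  · rcases v with x | j
    · simp
    · by_cases hj : j = i <;> simp [hj, hS']
  · rcases v with x | j <;> simp [mem_egStep_played, heq]

end starState

end Star

section Sweep

variable {n k : ℕ}

/-- The center was recolored `c` and then the leaves of `S` were recolored `d`, in a round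
opened by Alice iff `starter`. -/
def sweepState (c : Fin k) (S : Finset (Fin n)) (d : Fin k) (a : Option (Fin k)) (starter : Bool) :
    EGState (Fin 1 ⊕ Fin n) k :=
  starState (some c) true S (some d) a (xor starter (decide (Even S.card)))

theorem egStep_starState_center_eq_sweepState {cc a : Option (Fin k)} {t starter : Bool}
    {S : Finset (Fin n)} {c d : Fin k} (hS : S ≠ Finset.univ)
    (ht : (!t) = xor starter (decide (Even S.card))) :
    EGStep (starState cc false S (some d) a t) (.inl 0) c = sweepState c S d a starter := by
  rw [egStep_starState_center hS, sweepState, ht]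

theorem egStep_sweepState {c d : Fin k} {a : Option (Fin k)} {starter : Bool}
    {S : Finset (Fin n)} {i : Fin n} (hi : i ∉ S) :
    EGStep (sweepState c S d a starter) (.inr i) d =
      if insert i S = Finset.univ then
        starState (some c) false ∅ (some d) (some d) (xor starter (decide (Even n)))
      else sweepState c (insert i S) d a starter := by
  have hcard := Finset.card_insert_of_notMem hi
  split_ifs with hlast
  · rw [hlast, Finset.card_univ, Fintype.card_fin] at hcard
    rw [sweepState, egStep_starState_leaf_of_last hlast]
    cases starter <;> simp [hcard, Nat.even_add_one, -Nat.not_even_iff_odd]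
  · rw [sweepState, sweepState, egStep_starState_leaf (Or.inr hlast), hcard]
    cases starter <;> simp [Nat.even_add_one, -Nat.not_even_iff_odd]

theorem aliceCanKeepIn_sweepState {P : EGState (Fin 1 ⊕ Fin n) k → Prop} {c d : Fin k}
    {a : Option (Fin k)} {starter : Bool} (hd : IsLeast {e | e ≠ c ∧ a ≠ some e} d)
    (hsweep : ∀ T : Finset (Fin n), T ≠ Finset.univ → P (sweepState c T d a starter))
    (hend : P (starState (some c) false ∅ (some d) (some d) (xor starter (decide (Even n)))))
    {S : Finset (Fin n)} (hS : S ≠ Finset.univ) :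
    AliceCanKeepIn (completeBipartiteGraph (Fin 1) (Fin n)) P (sweepState c S d a starter) := by
  have hlegal : ∀ i ∉ S, {e | EGLegal (completeBipartiteGraph (Fin 1) (Fin n))
      (sweepState c S d a starter) (.inr i) e} = {e | e ≠ c ∧ a ≠ some e} := by
    intro i hi
    ext e
    simp [sweepState, egLegal_star_leaf_iff, hi, and_comm, eq_comm]
  have hnext : ∀ i ∉ S, P (EGStep (sweepState c S d a starter) (.inr i) d) := by
    intro i hi
    rw [egStep_sweepState hi]
    split_ifs with hlast
    exacts [hend, hsweep _ hlast]
  unfold AliceCanKeepIn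
  split_ifs
  · obtain ⟨i, hi⟩ := not_forall.mp (mt Finset.eq_univ_iff_forall.mpr hS)
    exact ⟨.inr i, d, (Set.ext_iff.mp (hlegal i hi) d).mpr hd.1, hnext i hi⟩
  · refine ⟨?_, ?_⟩
    · rintro (x | i) hv
      · simp [sweepState] at hv
      · have hi : i ∉ S := by simpa [sweepState] using hv
        exact ⟨d, (Set.ext_iff.mp (hlegal i hi) d).mpr hd.1⟩
    · rintro (x | i) e hg
      · simp [sweepState, EGLegalBobGreedy, EGLegal] at hg
      · have hi : i ∉ S := by simpa [sweepState] using hg.1.1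
        obtain rfl : e = d := (egLegalBobGreedy_iff_isLeast.mp hg).unique (hlegal i hi ▸ hd)
        exact hnext i hi

def WithSweeps (Q : EGState (Fin 1 ⊕ Fin n) k → Prop) (s : EGState (Fin 1 ⊕ Fin n) k) :
    Prop :=
  Q s ∨ ∃ c d a starter, IsLeast {e | e ≠ c ∧ a ≠ some e} d ∧
    Q (starState (some c) false ∅ (some d) (some d) (xor starter (decide (Even n)))) ∧
    ∃ S ≠ Finset.univ, s = sweepState c S d a starter

theorem aliceWinsEGGreedy_of_withSweeps {Q : EGState (Fin 1 ⊕ Fin n) k → Prop}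
    (hQ : ∀ s, Q s → AliceCanKeepIn (completeBipartiteGraph (Fin 1) (Fin n)) (WithSweeps Q) s)
    (hinit : Q (EGInit _ k)) : AliceWinsEGGreedy (completeBipartiteGraph (Fin 1) (Fin n)) k := by
  refine fun m =>
    egSurvivesGreedy_of_forall_aliceCanKeepIn (P := WithSweeps Q) ?_ m _ (Or.inl hinit)
  rintro s (hs | ⟨c, d, a, starter, hd, hend, S, hS, rfl⟩)
  · exact hQ s hs
  · exact aliceCanKeepIn_sweepState hd
      (fun T hT => Or.inr ⟨c, d, a, starter, hd, hend, T, hT, rfl⟩) (Or.inl hend) hS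

end Sweep

theorem aliceWinsEGGreedy_star_of_odd {n k : ℕ} (hn : Odd n) (hk : 3 ≤ k) :
    AliceWinsEGGreedy (completeBipartiteGraph (Fin 1) (Fin n)) k := by
  have hn0 : (∅ : Finset (Fin n)) ≠ Finset.univ :=
    (Finset.card_lt_iff_ne_univ _).mp (by simpa using hn.pos)
  refine aliceWinsEGGreedy_of_withSweeps (Q := fun s => ∃ b a, s = starState b false ∅ a a true)
    ?_ ⟨none, none, egInit_eq_starState⟩
  rintro s ⟨b, a, rfl⟩
  obtain ⟨c, hbc, hac⟩ := Fin.exists_some_ne_some_ne hk b a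
  obtain ⟨d, hd⟩ := exists_isLeast_setOf (p := fun e => e ≠ c ∧ a ≠ some e)
    ((Fin.exists_some_ne_some_ne hk (some c) a).imp fun e he =>
      ⟨fun h => he.1 (by rw [h]), he.2⟩)
  simp only [AliceCanKeepIn, starState_aliceTurn, if_true]
  refine ⟨.inl 0, c, by simp [egLegal_star_center_iff, hbc, hac], Or.inr ⟨c, d, a, true, hd,
    ⟨some c, some d, by simp [Nat.not_even_iff_odd.mpr hn]⟩, ∅, hn0, ?_⟩⟩
  rw [starState_empty (some d)]
  exact egStep_starState_center_eq_sweepState hn0 rfl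

section Four

variable {n : ℕ}

/-- Alice is to open a round; Bob is to open a round after Alice's sweep to center 3 and
leaves 0; Alice is to answer Bob's recoloring of leaf `ℓ` with color 1. -/
def StarFourCheckpoint (s : EGState (Fin 1 ⊕ Fin n) 4) : Prop :=
  (∃ b a, b ≠ some 3 ∧ a ≠ some 3 ∧ a ≠ some 0 ∧
      s = starState b false ∅ a a true) ∨
    s = starState (some 3) false ∅ (some 0) (some 0) false ∨
    ∃ ℓ, s = starState (some 3) false {ℓ} (some 1) (some 0) true

theorem aliceCanKeepIn_starFour_aliceOpens (hn : Even n) (hn0 : 0 < n) {b a : Option (Fin 4)}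
    (hb : b ≠ some 3) (ha3 : a ≠ some 3) (ha0 : a ≠ some 0) :
    AliceCanKeepIn (completeBipartiteGraph (Fin 1) (Fin n)) (WithSweeps StarFourCheckpoint)
      (starState b false ∅ a a true) := by
  have hS : (∅ : Finset (Fin n)) ≠ Finset.univ := (Finset.card_lt_iff_ne_univ _).mp (by simpa)
  simp only [AliceCanKeepIn, starState_aliceTurn, if_true]
  refine ⟨.inl 0, 3, by simp [egLegal_star_center_iff, hb, ha3], Or.inr ⟨3, 0, a, true,
    ⟨⟨by decide, ha0⟩, fun e _ => Fin.zero_le e⟩, Or.inr (Or.inl (by simp [hn])), ∅, hS,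
    ?_⟩⟩
  rw [starState_empty (some 0)]
  exact egStep_starState_center_eq_sweepState hS rfl

theorem aliceCanKeepIn_starFour_bobOpens (hn : Even n) (hn0 : 0 < n) :
    AliceCanKeepIn (completeBipartiteGraph (Fin 1) (Fin n)) (WithSweeps StarFourCheckpoint)
      (starState (some 3) false ∅ (some 0) (some 0) false) := by
  have : Nonempty (Fin n) := ⟨⟨0, hn0⟩⟩
  have hS : (∅ : Finset (Fin n)) ≠ Finset.univ := (Finset.card_lt_iff_ne_univ _).mp (by simpa)
  have hcenter : {e | EGLegal (completeBipartiteGraph (Fin 1) (Fin n))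
      (starState (some 3) false ∅ (some 0) (some 0) false) (.inl 0) e} =
        {e : Fin 4 | e ≠ 3 ∧ e ≠ 0} := by
    ext e
    simp [egLegal_star_center_iff, eq_comm]
  have hleaf : ∀ i, {e | EGLegal (completeBipartiteGraph (Fin 1) (Fin n))
      (starState (some 3) false ∅ (some 0) (some 0) false) (.inr i) e} =
        {e : Fin 4 | e ≠ 3 ∧ e ≠ 0} := by
    intro i
    ext e
    simp [egLegal_star_leaf_iff, eq_comm, and_comm]
  have hone : IsLeast {e : Fin 4 | e ≠ 3 ∧ e ≠ 0} 1 := isLeast_setOf_iff.mpr (by decide)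
  simp only [AliceCanKeepIn, starState_aliceTurn, Bool.false_eq_true, if_false]
  refine ⟨fun v _ => ⟨1, ?_⟩, fun v c hg => ?_⟩
  · rcases v with x | i
    · rw [Fin.fin_one_eq_zero x]
      exact (Set.ext_iff.mp hcenter 1).mpr (by decide)
    · exact (Set.ext_iff.mp (hleaf i) 1).mpr (by decide)
  rw [egLegalBobGreedy_iff_isLeast] at hg
  rcases v with x | i
  · rw [Fin.fin_one_eq_zero x] at hg ⊢
    obtain rfl : c = 1 := hg.unique (hcenter ▸ hone)
    refine Or.inr ⟨1, 2, some 0, false, isLeast_setOf_iff.mpr (by decide),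
      Or.inl ⟨some 1, some 2, by simp, by simp, by simp, by simp [hn]⟩, ∅, hS, ?_⟩
    rw [starState_empty (some 2)]
    exact egStep_starState_center_eq_sweepState hS rfl
  · obtain rfl : c = 1 := hg.unique (hleaf i ▸ hone)
    rw [starState_empty (some 1), egStep_starState_leaf (Or.inl rfl)]
    exact Or.inl (Or.inr (Or.inr ⟨i, by simp⟩))

theorem aliceCanKeepIn_starFour_bobLeaf (hn : Even n) (hn1 : 1 < n) (ℓ : Fin n) :
    AliceCanKeepIn (completeBipartiteGraph (Fin 1) (Fin n)) (WithSweeps StarFourCheckpoint)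
      (starState (some 3) false {ℓ} (some 1) (some 0) true) := by
  have hS : ({ℓ} : Finset (Fin n)) ≠ Finset.univ := (Finset.card_lt_iff_ne_univ _).mp (by simpa)
  have hlegal : EGLegal (completeBipartiteGraph (Fin 1) (Fin n))
      (starState (some (3 : Fin 4)) false {ℓ} (some 1) (some 0) true) (.inl 0) 2 := by
    refine egLegal_star_center_iff.mpr ⟨by simp, by simp, fun i => ?_⟩
    rw [starState_col_inr]
    split_ifs <;> simp
  simp only [AliceCanKeepIn, starState_aliceTurn, if_true]
  exact ⟨.inl 0, 2, hlegal, Or.inr ⟨2, 1, some 0, false, isLeast_setOf_iff.mpr (by decide),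
    Or.inl ⟨some 2, some 1, by simp, by simp, by simp, by simp [hn]⟩, {ℓ}, hS,
    egStep_starState_center_eq_sweepState hS rfl⟩⟩

theorem aliceWinsEGGreedy_star_four (hn : Even n) (hn1 : 1 < n) :
    AliceWinsEGGreedy (completeBipartiteGraph (Fin 1) (Fin n)) 4 := by
  refine aliceWinsEGGreedy_of_withSweeps (Q := StarFourCheckpoint)
    ?_ (Or.inl ⟨none, none, by simp, by simp, by simp, egInit_eq_starState⟩)
  rintro s (⟨b, a, hb, ha3, ha0, rfl⟩ | rfl | ⟨ℓ, rfl⟩)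
  · exact aliceCanKeepIn_starFour_aliceOpens hn (by omega) hb ha3 ha0
  · exact aliceCanKeepIn_starFour_bobOpens hn (by omega)
  · exact aliceCanKeepIn_starFour_bobLeaf hn hn1 ℓ

end Four

section Three

variable {n : ℕ}

theorem not_egLegal_star_center_of_three {s : EGState (Fin 1 ⊕ Fin n) 3} {b x y : Fin 3}
    {i j : Fin n} (hb : s.col (.inl 0) = some b) (hi : s.col (.inr i) = some x)
    (hj : s.col (.inr j) = some y) (hbx : b ≠ x) (hby : b ≠ y) (hxy : x ≠ y) (c : Fin 3) :
    ¬ EGLegal (completeBipartiteGraph (Fin 1) (Fin n)) s (.inl 0) c := by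
  rw [egLegal_star_center_iff]
  rintro ⟨-, hcb, hc⟩
  have hcx := hc i
  have hcy := hc j
  rw [hb] at hcb
  rw [hi] at hcx
  rw [hj] at hcy
  rcases Fin.eq_or_eq_or_eq_of_ne c hbx hby hxy with rfl | rfl | rfl <;> simp_all

theorem not_egSurvivesGreedy_two_star_three (h3 : 3 ≤ n) {t : EGState (Fin 1 ⊕ Fin n) 3}
    {i₀ : Fin n} {a b c : Fin 3} (hturn : t.aliceTurn = true) (hplayed : t.played = {.inr i₀})
    (hb : t.col (.inl 0) = some b) (hc : t.col (.inr i₀) = some c)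
    (ha : ∀ i, i ≠ i₀ → t.col (.inr i) = some a) (hbc : b ≠ c) (hba : b ≠ a)
    (hca : c ≠ a) :
    ¬ EGSurvivesGreedy (completeBipartiteGraph (Fin 1) (Fin n)) 2 t := by
  refine not_aliceCanKeepIn_of_alice hturn fun v e he => ?_
  rcases v with x | i
  · obtain ⟨j, hj, -⟩ := Fin.exists_some_ne_some_ne h3 (some i₀) (some i₀)
    rw [Fin.fin_one_eq_zero x] at he
    exact (not_egLegal_star_center_of_three hb hc (ha j (by simpa [eq_comm] using hj))
      hbc hba hca e he).elim
  · have hi : i ≠ i₀ := by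
      rintro rfl
      exact he.1 (by simp [hplayed])
    obtain ⟨j, hji, hji₀⟩ := Fin.exists_some_ne_some_ne h3 (some i) (some i₀)
    simp only [ne_eq, Option.some.injEq] at hji hji₀
    refine not_aliceCanKeepIn_of_bob (by simp [hturn]) (v := .inl 0)
      (by simp [mem_egStep_played, hplayed]) fun e' he' => ?_
    exact (not_egLegal_star_center_of_three (i := i₀) (j := j) (by simp [hb])
      (by rw [egStep_col, Function.update_of_ne (by simpa using hi.symm), hc])
      (by rw [egStep_col, Function.update_of_ne (by simpa using Ne.symm hji),
        ha j (Ne.symm hji₀)])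
      hbc hba hca e' he').elim

theorem not_aliceWinsEGGreedy_star_three (hn : Even n) (h3 : 3 ≤ n) :
    ¬ AliceWinsEGGreedy (completeBipartiteGraph (Fin 1) (Fin n)) 3 := by
  refine not_aliceWinsEGGreedy_of_egFull (m := 3) fun s ⟨hturn, hplayed, hcol, hproper⟩ => ?_
  replace hturn : s.aliceTurn = false := by
    simpa [hturn, add_comm 1 n, Nat.even_add_one] using hn
  obtain ⟨b, hb⟩ := Option.ne_none_iff_exists'.mp (hcol (.inl 0))
  choose f hf using fun i => Option.ne_none_iff_exists'.mp (hcol (.inr i))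
  have hbf : ∀ i, b ≠ f i := fun i h => hproper (.inl 0) (.inr i) b (by simp) hb (by rw [hf, h])
  let i₀ : Fin n := ⟨0, by omega⟩
  by_cases hmono : ∀ i, f i = f i₀
  · refine not_aliceCanKeepIn_of_bob hturn (v := .inr i₀) (by simp [hplayed]) fun c hc => ?_
    rw [egLegal_star_leaf_iff, hf, hb] at hc
    refine not_egSurvivesGreedy_two_star_three (i₀ := i₀) (a := f i₀) (b := b) (c := c) h3
      (by simp [hturn]) ?_ ?_ (by rw [egStep_col, Function.update_self])
      (fun i hi => ?_) (fun h => hc.2.2 (by rw [h])) (hbf i₀) (fun h => hc.2.1 (by rw [h]))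
    · ext w
      simp [mem_egStep_played, hplayed, Finset.eq_univ_iff_forall]
    · rw [egStep_col, Function.update_of_ne (by simp), hb]
    · rw [egStep_col, Function.update_of_ne (by simpa using hi), hf, hmono]
  · obtain ⟨j, hj⟩ := not_forall.mp hmono
    exact not_aliceCanKeepIn_of_bob hturn (v := .inl 0) (by simp [hplayed]) fun c hc =>
      absurd hc (not_egLegal_star_center_of_three hb (hf j) (hf i₀) (hbf j) (hbf i₀) hj c)

end Three

theorem three_le_of_aliceWinsEGGreedy_star {n k : ℕ} (hn : 0 < n)
    (hk : AliceWinsEGGreedy (completeBipartiteGraph (Fin 1) (Fin n)) k) : 3 ≤ k := by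
  by_contra! h
  refine not_aliceWinsEGGreedy_of_le_two ?_ (by omega) hk
  rintro (x | i)
  · exact ⟨.inr ⟨0, hn⟩, by simp⟩
  · exact ⟨.inl 0, by simp⟩

/-- For stars: χ_g^{∞2}(K_{1,n}) = 3 if n is odd, and = 4 if n ≥ 4 is even. -/
theorem eternal_greedy_game_chromatic_star (n : ℕ) :
    (Odd n → IsLeast {k | AliceWinsEGGreedy (completeBipartiteGraph (Fin 1) (Fin n)) k} 3) ∧
    (Even n → 4 ≤ n →
      IsLeast {k | AliceWinsEGGreedy (completeBipartiteGraph (Fin 1) (Fin n)) k} 4) := by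
  refine ⟨fun hn => ⟨aliceWinsEGGreedy_star_of_odd hn le_rfl,
    fun k => three_le_of_aliceWinsEGGreedy_star hn.pos⟩, fun hn h4 =>
    ⟨aliceWinsEGGreedy_star_four hn (by omega), fun k hk => ?_⟩⟩
  rcases (three_le_of_aliceWinsEGGreedy_star (by omega) hk).eq_or_lt with rfl | h
  · exact absurd hk (not_aliceWinsEGGreedy_star_three hn (by omega))
  · exact h
end
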